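/- Let X be a Banach space and K, L ⊆ X* nonempty, w*-compact, and convex. Then Sz(K + L) = max{Sz(K), Sz(L)}. -/

import Mathlib

open NormedSpace

noncomputable def derivIter {α : Type*} (d : Set α → Set α) (K : Set α) : Ordinal → Set α :=
  fun ξ => Ordinal.limitRecOn ξ K (fun _ ih => d ih)
    (fun o _ ih => ⋂ ζ : Set.Iio o, ih ζ.1 ζ.2)

/-- The Szlenk slicing derivation: `s_ε(K)` removes from `K` every point contained in
a `w*`-open set whose intersection with `K` has norm diameter at most `ε`. -/
def szSlice {X : Type*} [NormedAddCommGroup X] [NormedSpace ℝ X] (ε : ℝ)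
    (K : Set (StrongDual ℝ X)) : Set (StrongDual ℝ X) :=
  {f ∈ K | ∀ W : Set (WeakDual ℝ X), IsOpen W → StrongDual.toWeakDual f ∈ W →
    ε < Metric.diam (K ∩ (fun g => StrongDual.toWeakDual g) ⁻¹' W)}

open scoped Pointwise

/-!
Measure diameters in the dual norm on the weak* dual, and write `D^ξ_ε C` for the iterated
slicings. Translating by a point of `L` maps `D^ξ_ε K` into `D^ξ_ε (K + L)`, which gives
`Sz K ≤ Sz (K + L)`. Conversely, addition `K × L → K + L` is weak*-continuous and 2-Lipschitz, so
by compactness `D^ξ_ε (K + L)` lies in the image of `D^ξ_{ε/4} (K × L)`; and a point of `K × L`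
whose coordinates have ranks `r₁` and `r₂` has rank at most the natural sum `r₁ ♯ r₂`. Convexity
closes the set of ordinals below `Sz K` under addition, because the midpoint of a point surviving
`γ₁` slicings and one surviving `γ₂` slicings survives `γ₁ + γ₂` slicings at `ε/2`. Hence that set
is an interval `[0, ω^α)`, which is closed under natural sums.
-/

open Set Metric Bornology
open scoped Ordinal

universe u

section DerivIter

variable {α α' : Type*} {d : Set α → Set α} {K : Set α}

theorem derivIter_zero (d : Set α → Set α) (K : Set α) : derivIter d K 0 = K :=
  Ordinal.limitRecOn_zero _ _ _

theorem derivIter_add_one (d : Set α → Set α) (K : Set α) (o : Ordinal) :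
    derivIter d K (o + 1) = d (derivIter d K o) :=
  Ordinal.limitRecOn_add_one _ _ _ _

theorem derivIter_limit (d : Set α → Set α) (K : Set α) {o : Ordinal}
    (ho : Order.IsSuccLimit o) : derivIter d K o = ⋂ ζ : Iio o, derivIter d K ζ :=
  Ordinal.limitRecOn_limit _ _ _ _ ho

theorem derivIter_antitone (hd : ∀ C, d C ⊆ C) : Antitone (derivIter d K) := by
  intro ζ ξ hle
  induction ξ using Ordinal.limitRecOn with
  | zero => rw [nonpos_iff_eq_zero.1 hle]
  | add_one o ih =>
    rcases hle.eq_or_lt with rfl | hlt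
    · rfl
    · rw [derivIter_add_one]
      exact (hd _).trans (ih (Order.lt_add_one_iff.1 hlt))
  | limit o ho ih =>
    rcases hle.eq_or_lt with rfl | hlt
    · rfl
    · rw [derivIter_limit d K ho]
      exact iInter_subset (fun ζ : Iio o => derivIter d K ζ) ⟨ζ, hlt⟩

theorem exists_lt_mem_derivIter_notMem {x : α} (hx : x ∈ K) {a : Ordinal}
    (ha : x ∉ derivIter d K a) :
    ∃ r < a, x ∈ derivIter d K r ∧ x ∉ derivIter d K (r + 1) := by
  obtain ⟨c, hc, hmin⟩ := wellFounded_lt.has_min {c | x ∉ derivIter d K c} ⟨a, ha⟩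
  have hmem : ∀ b < c, x ∈ derivIter d K b := fun b hb => not_not.1 fun h => hmin b h hb
  rcases Ordinal.zero_or_succ_or_isSuccLimit c with rfl | ⟨r, rfl⟩ | hlim
  · exact absurd (by rwa [derivIter_zero]) hc
  · refine ⟨r, (Order.lt_succ r).trans_le (not_lt.1 (hmin a ha)), hmem r (Order.lt_succ r), ?_⟩
    rwa [← Order.succ_eq_add_one]
  · exact absurd (by rw [derivIter_limit d K hlim]; exact mem_iInter.2 fun b => hmem b b.2) hc

theorem image_derivIter {d' : Set α' → Set α'} {f : α → α'} (hf : Function.Bijective f)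
    (hfd : ∀ C, f '' d C = d' (f '' C)) (ξ : Ordinal) :
    f '' derivIter d K ξ = derivIter d' (f '' K) ξ := by
  induction ξ using Ordinal.limitRecOn with
  | zero => rw [derivIter_zero, derivIter_zero]
  | add_one o ih => rw [derivIter_add_one, derivIter_add_one, hfd, ih]
  | limit o ho ih =>
    rw [derivIter_limit _ _ ho, derivIter_limit _ _ ho, image_iInter hf]
    exact iInter_congr fun ζ => ih ζ ζ.2

end DerivIter

namespace Ordinal

/-- The natural (Hessenberg) sum of ordinals. -/
noncomputable def nadd (a b : Ordinal.{u}) : Ordinal.{u} :=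
  max (⨆ a' : Iio a, Order.succ (nadd a' b)) (⨆ b' : Iio b, Order.succ (nadd a b'))
termination_by (a, b)
decreasing_by
  · exact Prod.Lex.left _ _ a'.2
  · exact Prod.Lex.right _ b'.2

infixl:65 " ♯ " => nadd

theorem nadd_le_iff {a b c : Ordinal} :
    a ♯ b ≤ c ↔ (∀ a' < a, a' ♯ b < c) ∧ ∀ b' < b, a ♯ b' < c := by
  rw [nadd, max_le_iff, Ordinal.iSup_le_iff, Ordinal.iSup_le_iff]
  simp only [Order.succ_le_iff, Subtype.forall, mem_Iio]

theorem nadd_lt_nadd_right {a' a : Ordinal} (h : a' < a) (b : Ordinal) : a' ♯ b < a ♯ b :=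
  (nadd_le_iff.1 le_rfl).1 a' h

theorem nadd_lt_nadd_left {b' b : Ordinal} (h : b' < b) (a : Ordinal) : a ♯ b' < a ♯ b :=
  (nadd_le_iff.1 le_rfl).2 b' h

theorem omega0_opow_mul_add_lt {d x : Ordinal} {k' k : ℕ} (hk : k' < k) (hx : x < ω ^ d) :
    ω ^ d * k' + x < ω ^ d * k :=
  calc ω ^ d * k' + x < ω ^ d * k' + ω ^ d := add_lt_add_right hx _
    _ = ω ^ d * ↑(k' + 1) := by push_cast; rw [mul_add_one]
    _ ≤ ω ^ d * k := mul_le_mul_right (by exact_mod_cast hk) _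

theorem exists_nat_mul_add_of_lt {a d k : Ordinal} (hk : k ≤ ω) (ha : a < ω ^ d * k) :
    ∃ m : ℕ, (m : Ordinal) < k ∧ ∃ r < ω ^ d, a = ω ^ d * m + r := by
  have hd : ω ^ d ≠ 0 := opow_ne_zero d omega0_ne_zero
  have hq : a / ω ^ d < k := (lt_mul_iff_div_lt hd).1 ha
  obtain ⟨m, hm⟩ := lt_omega0.1 (hq.trans_le hk)
  exact ⟨m, hm ▸ hq, a % ω ^ d, mod_lt a hd, by rw [← hm, div_add_mod]⟩

theorem nadd_le_omega0_opow_mul_add {d a₀ b₀ : Ordinal}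
    (hd : ∀ x < ω ^ d, ∀ y < ω ^ d, x ♯ y < ω ^ d) (ha₀ : a₀ < ω ^ d) (hb₀ : b₀ < ω ^ d)
    (m n : ℕ) : (ω ^ d * m + a₀) ♯ (ω ^ d * n + b₀) ≤ ω ^ d * ↑(m + n) + (a₀ ♯ b₀) := by
  suffices ∀ a b (m n : ℕ) (a₀ b₀ : Ordinal), a₀ < ω ^ d → b₀ < ω ^ d →
      a = ω ^ d * m + a₀ → b = ω ^ d * n + b₀ → a ♯ b ≤ ω ^ d * ↑(m + n) + (a₀ ♯ b₀) from
    this _ _ m n a₀ b₀ ha₀ hb₀ rfl rfl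
  intro a
  induction a using WellFoundedLT.induction with | _ a iha => ?_
  intro b
  induction b using WellFoundedLT.induction with | _ b ihb => ?_
  rintro m n a₀ b₀ ha₀ hb₀ rfl rfl
  rw [nadd_le_iff]
  constructor
  · intro a' ha'
    obtain ⟨m', hm', r, hr, rfl⟩ := exists_nat_mul_add_of_lt (natCast_lt_omega0 (m + 1)).le
      (ha'.trans (omega0_opow_mul_add_lt (Nat.lt_succ_self m) ha₀))
    refine (iha _ ha' _ m' n r b₀ hr hb₀ rfl rfl).trans_lt ?_
    rcases (Nat.lt_succ_iff.1 (by exact_mod_cast hm')).lt_or_eq with hlt | rfl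
    · exact (omega0_opow_mul_add_lt (by omega) (hd r hr b₀ hb₀)).trans_le le_self_add
    · exact add_lt_add_right (nadd_lt_nadd_right ((add_lt_add_iff_left _).1 ha') b₀) _
  · intro b' hb'
    obtain ⟨n', hn', s, hs, rfl⟩ := exists_nat_mul_add_of_lt (natCast_lt_omega0 (n + 1)).le
      (hb'.trans (omega0_opow_mul_add_lt (Nat.lt_succ_self n) hb₀))
    refine (ihb _ hb' m n' a₀ s ha₀ hs rfl rfl).trans_lt ?_
    rcases (Nat.lt_succ_iff.1 (by exact_mod_cast hn')).lt_or_eq with hlt | rfl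
    · exact (omega0_opow_mul_add_lt (by omega) (hd a₀ ha₀ s hs)).trans_le le_self_add
    · exact add_lt_add_right (nadd_lt_nadd_left ((add_lt_add_iff_left _).1 hb') a₀) _

theorem nadd_lt_omega0_opow {c a b : Ordinal} (ha : a < ω ^ c) (hb : b < ω ^ c) :
    a ♯ b < ω ^ c := by
  induction c using WellFoundedLT.induction generalizing a b with | _ c ih => ?_
  rcases zero_or_succ_or_isSuccLimit c with rfl | ⟨d, rfl⟩ | hc
  · rw [opow_zero, Order.lt_one_iff] at ha hb
    subst ha hb
    exact (nadd_le_iff (c := 0).2 ⟨fun _ h => absurd h not_lt_zero,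
      fun _ h => absurd h not_lt_zero⟩).trans_lt (by simp)
  · have hd := fun x hx y hy => ih d (Order.lt_succ d) (a := x) (b := y) hx hy
    rw [opow_succ] at ha hb ⊢
    obtain ⟨m, -, r, hr, rfl⟩ := exists_nat_mul_add_of_lt le_rfl ha
    obtain ⟨n, -, s, hs, rfl⟩ := exists_nat_mul_add_of_lt le_rfl hb
    calc _ ≤ ω ^ d * ↑(m + n) + (r ♯ s) := nadd_le_omega0_opow_mul_add hd hr hs m n
      _ < ω ^ d * ↑(m + n + 1) := omega0_opow_mul_add_lt (Nat.lt_succ_self _) (hd r hr s hs)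
      _ ≤ ω ^ d * ω := mul_le_mul_right (natCast_lt_omega0 _).le _
  · obtain ⟨c₁, hc₁, ha⟩ := (lt_opow_of_isSuccLimit omega0_ne_zero hc).1 ha
    obtain ⟨c₂, hc₂, hb⟩ := (lt_opow_of_isSuccLimit omega0_ne_zero hc).1 hb
    have hmono := fun {x y : Ordinal} (h : x ≤ y) => opow_le_opow_right (a := ω) omega0_pos h
    exact (ih _ (max_lt hc₁ hc₂) (ha.trans_le (hmono (le_max_left _ _)))
      (hb.trans_le (hmono (le_max_right _ _)))).trans_le (hmono (max_lt hc₁ hc₂).le)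

theorem nadd_mem_of_isLowerSet {S : Set Ordinal} (hS : IsLowerSet S)
    (hadd : ∀ a ∈ S, ∀ b ∈ S, a + b ∈ S) {a b : Ordinal} (ha : a ∈ S) (hb : b ∈ S) :
    a ♯ b ∈ S := by
  obtain rfl | ⟨α, rfl⟩ := hS.eq_univ_or_Iio
  · trivial
  have hα : IsPrincipal (· + ·) α := fun x y hx hy => hadd x hx y hy
  obtain rfl | ⟨c, rfl⟩ := isPrincipal_add_iff_zero_or_omega0_opow.1 hα
  · exact (not_lt_zero (mem_Iio.1 ha)).elim
  · exact nadd_lt_omega0_opow ha hb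

end Ordinal

theorem Metric.exists_lt_dist_of_lt_diam {M : Type*} [PseudoMetricSpace M] {s : Set M} {ε : ℝ}
    (hε : 0 ≤ ε) (h : ε < diam s) : ∃ x ∈ s, ∃ y ∈ s, ε < dist x y := by
  by_contra! hc
  exact h.not_ge (diam_le_of_forall_dist_le hε hc)

theorem Metric.diam_prod_le {M M' : Type*} [PseudoMetricSpace M] [PseudoMetricSpace M']
    {s : Set M} {t : Set M'} (hs : IsBounded s) (ht : IsBounded t) :
    diam (s ×ˢ t) ≤ max (diam s) (diam t) :=
  diam_le_of_forall_dist_le (le_max_of_le_left diam_nonneg) fun p hp q hq => by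
    rw [Prod.dist_eq]
    exact max_le_max (dist_le_diam_of_mem hs hp.1 hq.1) (dist_le_diam_of_mem ht hp.2 hq.2)

theorem mem_image_iInter_of_antitone {β β' ι : Type*} [TopologicalSpace β] [TopologicalSpace β']
    [T2Space β] [T1Space β'] [Preorder ι] [IsDirected ι (· ≤ ·)] [Nonempty ι] {F : ι → Set β}
    (hF : Antitone F) (hc : ∀ i, IsCompact (F i)) {φ : β → β'} (hφ : Continuous φ) {x : β'}
    (hx : ∀ i, x ∈ φ '' F i) : x ∈ φ '' ⋂ i, F i := by
  obtain ⟨z, hz⟩ := IsCompact.nonempty_iInter_of_directed_nonempty_isCompact_isClosed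
    (fun i => F i ∩ φ ⁻¹' {x})
    (fun i j => let ⟨k, hik, hjk⟩ := hF.directed_ge i j
      ⟨k, inter_subset_inter_left _ hik, inter_subset_inter_left _ hjk⟩)
    (fun i => by obtain ⟨z, hz, rfl⟩ := hx i; exact ⟨z, hz, rfl⟩)
    (fun i => (hc i).inter_right (isClosed_singleton.preimage hφ))
    (fun i => (hc i).isClosed.inter (isClosed_singleton.preimage hφ))
  obtain ⟨i⟩ := ‹Nonempty ι›
  exact ⟨z, mem_iInter.2 fun j => (mem_iInter.1 hz j).1, (mem_iInter.1 hz i).2⟩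

section Slice

variable {β β' M M' : Type*} [TopologicalSpace β] [TopologicalSpace β']
  [PseudoMetricSpace M] [PseudoMetricSpace M']

/-- `szSlice ε` is `slice WeakDual.toStrongDual ε` transported along `StrongDual.toWeakDual`. -/
def slice (e : β → M) (ε : ℝ) (C : Set β) : Set β :=
  {x ∈ C | ∀ W : Set β, IsOpen W → x ∈ W → ε < diam (e '' (C ∩ W))}

/-- `ξ ∈ belowSzlenk e C` if and only if `ξ < Sz(C)`. -/
def belowSzlenk (e : β → M) (C : Set β) : Set Ordinal :=
  {ξ | ∃ ε : ℝ, 0 < ε ∧ (derivIter (slice e ε) C ξ).Nonempty}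

variable {e : β → M} {e' : β' → M'} {ε ε' : ℝ} {C S : Set β}

theorem slice_subset : slice e ε C ⊆ C := fun _ hx => hx.1

theorem derivIter_slice_antitone : Antitone (derivIter (slice e ε) C) :=
  derivIter_antitone fun _ => slice_subset

theorem derivIter_slice_subset (ξ : Ordinal) : derivIter (slice e ε) C ξ ⊆ C := by
  simpa only [derivIter_zero] using derivIter_slice_antitone (e := e) (ε := ε) (C := C)
    (zero_le : 0 ≤ ξ)

theorem isLowerSet_belowSzlenk : IsLowerSet (belowSzlenk e C) :=
  fun _ _ hle ⟨ε, hε, hne⟩ => ⟨ε, hε, hne.mono (derivIter_slice_antitone hle)⟩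

theorem exists_isOpen_diam_le_of_notMem_slice {x : β} (hx : x ∈ C) (hx' : x ∉ slice e ε C) :
    ∃ W, IsOpen W ∧ x ∈ W ∧ diam (e '' (C ∩ W)) ≤ ε := by
  simpa [slice, hx] using hx'

theorem isClosed_slice (hC : IsClosed C) : IsClosed (slice e ε C) := by
  have : slice e ε C = C \ ⋃₀ {W | IsOpen W ∧ diam (e '' (C ∩ W)) ≤ ε} := by
    ext x
    simp only [slice, mem_ofPred_eq, mem_sdiff, mem_sUnion, not_exists, not_and]
    grind
  rw [this]
  exact hC.sdiff (isOpen_sUnion fun _ h => h.1)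

theorem isClosed_derivIter_slice (hC : IsClosed C) (ξ : Ordinal) :
    IsClosed (derivIter (slice e ε) C ξ) := by
  induction ξ using Ordinal.limitRecOn with
  | zero => rwa [derivIter_zero]
  | add_one o ih => rw [derivIter_add_one]; exact isClosed_slice ih
  | limit o ho ih => rw [derivIter_limit _ _ ho]; exact isClosed_iInter fun ζ => ih ζ ζ.2

theorem isCompact_derivIter_slice [T2Space β] (hC : IsCompact C) (ξ : Ordinal) :
    IsCompact (derivIter (slice e ε) C ξ) :=
  hC.of_isClosed_subset (isClosed_derivIter_slice hC.isClosed ξ) (derivIter_slice_subset ξ)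

theorem exists_isOpen_diam_le_of_mem_derivIter (hC : IsClosed C) (hb : IsBounded (e '' C))
    {x : β} {r : Ordinal} (hx : x ∈ derivIter (slice e ε) C r)
    (hx' : x ∉ derivIter (slice e ε) C (r + 1)) :
    ∃ U, IsOpen U ∧ x ∈ U ∧ (∀ z ∈ U, z ∉ derivIter (slice e ε) C (r + 1)) ∧
      diam (e '' (derivIter (slice e ε) C r ∩ U)) ≤ ε := by
  rw [derivIter_add_one] at hx' ⊢
  obtain ⟨U, hU, hxU, hUd⟩ := exists_isOpen_diam_le_of_notMem_slice hx hx'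
  refine ⟨U \ slice e ε (derivIter (slice e ε) C r),
    hU.sdiff (isClosed_slice (isClosed_derivIter_slice hC r)), ⟨hxU, hx'⟩, fun z hz => hz.2, ?_⟩
  exact (diam_mono (image_mono (inter_subset_inter_right _ sdiff_subset))
    (hb.subset (image_mono (inter_subset_left.trans (derivIter_slice_subset r))))).trans hUd

theorem slice_mono {S' : Set β} (h : S ⊆ S') (hb : IsBounded (e '' S')) :
    slice e ε S ⊆ slice e ε S' :=
  fun _ hx => ⟨h hx.1, fun W hW hxW => (hx.2 W hW hxW).trans_le <|
    diam_mono (image_mono (inter_subset_inter_left W h)) (hb.subset (image_mono inter_subset_left))⟩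

theorem mapsTo_slice {φ : β → β'} {S' : Set β'} {ρ : ℝ} (hφ : Continuous φ) (hρ : 0 < ρ)
    (hε : 0 ≤ ε) (hε' : ε' ≤ ρ * ε)
    (hφe : ∀ p q, ρ * dist (e p) (e q) ≤ dist (e' (φ p)) (e' (φ q)))
    (hS : MapsTo φ S S') (hb : IsBounded (e' '' S')) :
    MapsTo φ (slice e ε S) (slice e' ε' S') := by
  rintro z ⟨hzS, hz⟩
  refine ⟨hS hzS, fun W hW hzW => ?_⟩
  obtain ⟨_, ⟨p, hp, rfl⟩, _, ⟨q, hq, rfl⟩, hpq⟩ :=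
    exists_lt_dist_of_lt_diam hε (hz _ (hW.preimage hφ) hzW)
  have hb' : IsBounded (e' '' (S' ∩ W)) := hb.subset (image_mono inter_subset_left)
  calc ε' ≤ ρ * ε := hε'
    _ < ρ * dist (e p) (e q) := mul_lt_mul_of_pos_left hpq hρ
    _ ≤ dist (e' (φ p)) (e' (φ q)) := hφe p q
    _ ≤ diam (e' '' (S' ∩ W)) :=
      dist_le_diam_of_mem hb' ⟨φ p, ⟨hS hp.1, hp.2⟩, rfl⟩ ⟨φ q, ⟨hS hq.1, hq.2⟩, rfl⟩

theorem mapsTo_derivIter_slice {φ : β → β'} {C' : Set β'} {ρ : ℝ} (hφ : Continuous φ)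
    (hρ : 0 < ρ) (hε : 0 ≤ ε) (hε' : ε' ≤ ρ * ε)
    (hφe : ∀ p q, ρ * dist (e p) (e q) ≤ dist (e' (φ p)) (e' (φ q)))
    (hC : MapsTo φ C C') (hb : IsBounded (e' '' C')) (ξ : Ordinal) :
    MapsTo φ (derivIter (slice e ε) C ξ) (derivIter (slice e' ε') C' ξ) := by
  induction ξ using Ordinal.limitRecOn with
  | zero => simpa only [derivIter_zero] using hC
  | add_one o ih =>
    rw [derivIter_add_one, derivIter_add_one]
    exact mapsTo_slice hφ hρ hε hε' hφe ih (hb.subset (image_mono (derivIter_slice_subset o)))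
  | limit o ho ih =>
    rw [derivIter_limit _ _ ho, derivIter_limit _ _ ho]
    exact mapsTo_iInter_iInter fun ζ => ih ζ ζ.2

theorem derivIter_slice_subset_of_le (hε : 0 ≤ ε) (hε' : ε' ≤ ε) (hb : IsBounded (e '' C))
    (ξ : Ordinal) : derivIter (slice e ε) C ξ ⊆ derivIter (slice e ε') C ξ :=
  mapsTo_derivIter_slice continuous_id one_pos hε (by rwa [one_mul])
    (fun p q => (one_mul _).le) (mapsTo_id C) hb ξ

theorem slice_image_subset [T2Space β'] {φ : β → β'} {L ν : ℝ} (hφ : Continuous φ)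
    (hL : 0 ≤ L) (hε : 2 * (L * ν) ≤ ε)
    (hφe : ∀ p q, dist (e' (φ p)) (e' (φ q)) ≤ L * dist (e p) (e q))
    (hS : IsCompact S) (hb : IsBounded (e '' S)) :
    slice e' ε (φ '' S) ⊆ φ '' slice e ν S := by
  rintro x ⟨hx, hslice⟩
  by_contra hnot
  -- The fibre over `x` is covered by `ν`-small open sets; by compactness, the rest of `S` maps
  -- to a closed set avoiding `x`, whose complement is a `2Lν`-small neighbourhood of `x`.
  set U := ⋃₀ {W | IsOpen W ∧ diam (e '' (S ∩ W)) ≤ ν ∧ ∃ i ∈ S ∩ W, φ i = x}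
  have hfib : ∀ z ∈ S, φ z = x → z ∈ U := by
    intro z hz hzx
    obtain ⟨W, hW, hzW, hWd⟩ :=
      exists_isOpen_diam_le_of_notMem_slice hz fun h => hnot ⟨z, h, hzx⟩
    exact ⟨W, ⟨hW, hWd, z, ⟨hz, hzW⟩, hzx⟩, hzW⟩
  set V := (φ '' (S \ U))ᶜ
  have hV : IsOpen V :=
    ((hS.diff (isOpen_sUnion fun _ h => h.1)).image hφ).isClosed.isOpen_compl
  have hxV : x ∈ V := fun ⟨z, ⟨hz, hzU⟩, hzx⟩ => hzU (hfib z hz hzx)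
  have hnear : ∀ y ∈ φ '' S ∩ V, dist (e' y) (e' x) ≤ L * ν := by
    rintro _ ⟨⟨z, hz, rfl⟩, hzV⟩
    have hzU : z ∈ U := by
      by_contra h
      exact hzV (mem_image_of_mem φ ⟨hz, h⟩)
    obtain ⟨W, ⟨-, hWd, i, hi, rfl⟩, hzW⟩ := hzU
    calc dist (e' (φ z)) (e' (φ i)) ≤ L * dist (e z) (e i) := hφe z i
      _ ≤ L * ν := mul_le_mul_of_nonneg_left ((dist_le_diam_of_mem
          (hb.subset (image_mono inter_subset_left)) ⟨z, ⟨hz, hzW⟩, rfl⟩ ⟨i, hi, rfl⟩).trans hWd) hL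
  refine (hslice V hV hxV).not_ge ?_
  have hne : (e' '' (φ '' S ∩ V)).Nonempty := ⟨e' x, x, ⟨hx, hxV⟩, rfl⟩
  refine diam_le_of_forall_dist_le_of_nonempty hne ?_
  rintro _ ⟨y, hy, rfl⟩ _ ⟨y', hy', rfl⟩
  calc dist (e' y) (e' y') ≤ dist (e' y) (e' x) + dist (e' y') (e' x) := dist_triangle_right _ _ _
    _ ≤ ε := by linarith [hnear y hy, hnear y' hy']

theorem derivIter_slice_image_subset [T2Space β] [T2Space β'] {φ : β → β'} {L ν : ℝ}
    (hφ : Continuous φ) (hL : 0 ≤ L) (hε : 2 * (L * ν) ≤ ε)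
    (hφe : ∀ p q, dist (e' (φ p)) (e' (φ q)) ≤ L * dist (e p) (e q))
    (hC : IsCompact C) (hb : IsBounded (e '' C)) (hb' : IsBounded (e' '' (φ '' C)))
    (ξ : Ordinal) : derivIter (slice e' ε) (φ '' C) ξ ⊆ φ '' derivIter (slice e ν) C ξ := by
  induction ξ using Ordinal.limitRecOn with
  | zero => rw [derivIter_zero, derivIter_zero]
  | add_one o ih =>
    rw [derivIter_add_one, derivIter_add_one]
    exact (slice_mono ih (hb'.subset (image_mono (image_mono (derivIter_slice_subset o))))).trans
      (slice_image_subset hφ hL hε hφe (isCompact_derivIter_slice hC o)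
        (hb.subset (image_mono (derivIter_slice_subset o))))
  | limit o ho ih =>
    rw [derivIter_limit _ _ ho, derivIter_limit _ _ ho]
    have : Nonempty (Iio o) := ⟨⟨0, ho.bot_lt⟩⟩
    exact fun x hx => mem_image_iInter_of_antitone (F := fun ζ : Iio o => derivIter (slice e ν) C ζ)
      (fun _ _ h => derivIter_slice_antitone h) (fun ζ => isCompact_derivIter_slice hC ζ) hφ
      fun ζ => ih ζ ζ.2 (mem_iInter.1 hx ζ)

end Slice

section Product

variable {β β' M M' : Type*} [TopologicalSpace β] [TopologicalSpace β']
  [PseudoMetricSpace M] [PseudoMetricSpace M'] {e : β → M} {e' : β' → M'} {ε : ℝ}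
  {A : Set β} {B : Set β'}

open Ordinal in
theorem notMem_derivIter_prod_nadd (hA : IsClosed A) (hB : IsClosed B)
    (hAb : IsBounded (e '' A)) (hBb : IsBounded (e' '' B)) (r₁ r₂ : Ordinal) {y : β × β'}
    (h₁ : y.1 ∉ derivIter (slice e ε) A (r₁ + 1)) (h₂ : y.2 ∉ derivIter (slice e' ε) B (r₂ + 1)) :
    y ∉ derivIter (slice (Prod.map e e') ε) (A ×ˢ B) (r₁ ♯ r₂ + 1) := by
  induction r₁ using WellFoundedLT.induction generalizing r₂ y with | _ r₁ ih₁ => ?_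
  induction r₂ using WellFoundedLT.induction generalizing y with | _ r₂ ih₂ => ?_
  set D := derivIter (slice (Prod.map e e') ε) (A ×ˢ B) (r₁ ♯ r₂)
  have drop₁ : ∀ z : β × β', z.2 ∉ derivIter (slice e' ε) B (r₂ + 1) →
      z.1 ∉ derivIter (slice e ε) A r₁ → z ∉ D := by
    intro z hz₂ hz₁ hz
    obtain ⟨s, hs, -, hs'⟩ := exists_lt_mem_derivIter_notMem (derivIter_slice_subset _ hz).1 hz₁
    exact ih₁ s hs r₂ hs' hz₂
      (derivIter_slice_antitone (Order.add_one_le_of_lt (nadd_lt_nadd_right hs r₂)) hz)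
  have drop₂ : ∀ z : β × β', z.1 ∉ derivIter (slice e ε) A (r₁ + 1) →
      z.2 ∉ derivIter (slice e' ε) B r₂ → z ∉ D := by
    intro z hz₁ hz₂ hz
    obtain ⟨s, hs, -, hs'⟩ := exists_lt_mem_derivIter_notMem (derivIter_slice_subset _ hz).2 hz₂
    exact ih₂ s hs hz₁ hs'
      (derivIter_slice_antitone (Order.add_one_le_of_lt (nadd_lt_nadd_left hs r₁)) hz)
  intro hy
  have hyD : y ∈ D := derivIter_slice_antitone le_self_add hy
  have hy₁ : y.1 ∈ derivIter (slice e ε) A r₁ := not_not.1 fun h => drop₁ y h₂ h hyD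
  have hy₂ : y.2 ∈ derivIter (slice e' ε) B r₂ := not_not.1 fun h => drop₂ y h₁ h hyD
  obtain ⟨U, hU, hyU, hU₁, hUd⟩ := exists_isOpen_diam_le_of_mem_derivIter hA hAb hy₁ h₁
  obtain ⟨V, hV, hyV, hV₂, hVd⟩ := exists_isOpen_diam_le_of_mem_derivIter hB hBb hy₂ h₂
  rw [derivIter_add_one] at hy
  refine (hy.2 _ (hU.prod hV) ⟨hyU, hyV⟩).not_ge ?_
  have hsub : Prod.map e e' '' (D ∩ U ×ˢ V) ⊆
      (e '' (derivIter (slice e ε) A r₁ ∩ U)) ×ˢ (e' '' (derivIter (slice e' ε) B r₂ ∩ V)) := by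
    rintro _ ⟨z, ⟨hz, hzU, hzV⟩, rfl⟩
    exact ⟨⟨z.1, ⟨not_not.1 fun h => drop₁ z (hV₂ _ hzV) h hz, hzU⟩, rfl⟩,
      ⟨z.2, ⟨not_not.1 fun h => drop₂ z (hU₁ _ hzU) h hz, hzV⟩, rfl⟩⟩
  have hbd₁ : IsBounded (e '' (derivIter (slice e ε) A r₁ ∩ U)) :=
    hAb.subset (image_mono (inter_subset_left.trans (derivIter_slice_subset r₁)))
  have hbd₂ : IsBounded (e' '' (derivIter (slice e' ε) B r₂ ∩ V)) :=
    hBb.subset (image_mono (inter_subset_left.trans (derivIter_slice_subset r₂)))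
  exact (diam_mono hsub (hbd₁.prod hbd₂)).trans ((diam_prod_le hbd₁ hbd₂).trans (max_le hUd hVd))

open Ordinal in
theorem derivIter_prod_eq_empty (hA : IsClosed A) (hB : IsClosed B)
    (hAb : IsBounded (e '' A)) (hBb : IsBounded (e' '' B)) {γ : Ordinal}
    (hγ : ∀ r₁ r₂, (derivIter (slice e ε) A r₁).Nonempty →
      (derivIter (slice e' ε) B r₂).Nonempty → r₁ ♯ r₂ < γ)
    (hAγ : derivIter (slice e ε) A γ = ∅) (hBγ : derivIter (slice e' ε) B γ = ∅) :
    derivIter (slice (Prod.map e e') ε) (A ×ˢ B) γ = ∅ := by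
  refine eq_empty_of_forall_notMem fun y hy => ?_
  have hyAB := derivIter_slice_subset γ hy
  obtain ⟨r₁, -, hr₁, hr₁'⟩ := exists_lt_mem_derivIter_notMem hyAB.1 (hAγ ▸ notMem_empty y.1)
  obtain ⟨r₂, -, hr₂, hr₂'⟩ := exists_lt_mem_derivIter_notMem hyAB.2 (hBγ ▸ notMem_empty y.2)
  exact notMem_derivIter_prod_nadd hA hB hAb hBb r₁ r₂ hr₁' hr₂'
    (derivIter_slice_antitone (Order.add_one_le_of_lt (hγ r₁ r₂ ⟨_, hr₁⟩ ⟨_, hr₂⟩)) hy)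

end Product

section Linear

variable {β M : Type*} [AddCommGroup β] [Module ℝ β] [SeminormedAddCommGroup M] [NormedSpace ℝ M]
  {e : β →ₗ[ℝ] M} {ε : ℝ} {A B C : Set β}

theorem dist_map_midpoint_midpoint (e : β →ₗ[ℝ] M) (x p q : β) :
    dist (e (midpoint ℝ x p)) (e (midpoint ℝ x q)) = 2⁻¹ * dist (e p) (e q) := by
  simp only [midpoint_eq_smul_add, map_smul, map_add, dist_smul₀, dist_add_left, invOf_eq_inv]
  norm_num

theorem dist_map_add_add_le (e : β →ₗ[ℝ] M) (p q : β × β) :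
    dist (e (p.1 + p.2)) (e (q.1 + q.2)) ≤ 2 * dist (Prod.map e e p) (Prod.map e e q) := by
  simp only [map_add, Prod.dist_eq, Prod.map_fst, Prod.map_snd]
  linarith [dist_add_add_le (e p.1) (e p.2) (e q.1) (e q.2),
    le_max_left (dist (e p.1) (e q.1)) (dist (e p.2) (e q.2)),
    le_max_right (dist (e p.1) (e q.1)) (dist (e p.2) (e q.2))]

variable [TopologicalSpace β] [ContinuousAdd β]

theorem belowSzlenk_subset_add (hb : IsBounded (e '' (A + B))) {y : β} (hy : y ∈ B) :
    belowSzlenk e A ⊆ belowSzlenk e (A + B) := by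
  rintro ξ ⟨ε, hε, x, hx⟩
  refine ⟨ε, hε, x + y, mapsTo_derivIter_slice (φ := (· + y)) (continuous_add_const y) one_pos
    hε.le (one_mul ε).ge (fun p q => ?_) (fun _ hz => add_mem_add hz hy) hb ξ hx⟩
  rw [one_mul, map_add, map_add, dist_add_right]

variable [ContinuousConstSMul ℝ β]

theorem continuous_midpoint_left (x : β) : Continuous (midpoint ℝ x) :=
  ((continuous_const.add continuous_id).const_smul (⅟2 : ℝ)).congr fun y =>
    (midpoint_eq_smul_add ℝ x y).symm

theorem mapsTo_midpoint_derivIter_slice (hC : Convex ℝ C) (hb : IsBounded (e '' C)) (hε : 0 ≤ ε)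
    (γ₂ : Ordinal) : ∀ γ₁, ∀ x ∈ derivIter (slice e ε) C γ₁, MapsTo (midpoint ℝ x)
      (derivIter (slice e ε) C γ₂) (derivIter (slice e (ε / 2)) C (γ₁ + γ₂)) := by
  have hhalf : ε / 2 ≤ 2⁻¹ * ε := by linarith
  induction γ₂ using Ordinal.limitRecOn with
  | zero =>
    intro γ₁ x hx t ht
    rw [derivIter_zero] at ht
    rw [add_zero, midpoint_comm]
    refine mapsTo_derivIter_slice (continuous_midpoint_left t) (by norm_num) hε hhalf
      (fun p q => (dist_map_midpoint_midpoint e t p q).ge) (fun z hz => ?_) hb γ₁ hx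
    rw [midpoint_comm]
    exact hC.midpoint_mem hz ht
  | add_one η ih =>
    intro γ₁ x hx
    rw [derivIter_add_one, ← add_assoc, derivIter_add_one]
    exact mapsTo_slice (continuous_midpoint_left x) (by norm_num) hε hhalf
      (fun p q => (dist_map_midpoint_midpoint e x p q).ge) (ih γ₁ x hx)
      (hb.subset (image_mono (derivIter_slice_subset _)))
  | limit o ho ih =>
    intro γ₁ x hx t ht
    rw [derivIter_limit _ _ (Ordinal.isSuccLimit_add γ₁ ho)]
    refine mem_iInter.2 fun ⟨c, hc⟩ => ?_
    obtain ⟨η, hη, hcη⟩ := (Ordinal.lt_add_iff_of_isSuccLimit ho).1 hc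
    exact derivIter_slice_antitone hcη.le (ih η hη γ₁ x hx (derivIter_slice_antitone hη.le ht))

theorem add_mem_belowSzlenk (hC : Convex ℝ C) (hb : IsBounded (e '' C)) {γ₁ γ₂ : Ordinal}
    (h₁ : γ₁ ∈ belowSzlenk e C) (h₂ : γ₂ ∈ belowSzlenk e C) : γ₁ + γ₂ ∈ belowSzlenk e C := by
  obtain ⟨ε₁, hε₁, x, hx⟩ := h₁
  obtain ⟨ε₂, hε₂, t, ht⟩ := h₂
  have hε : 0 < min ε₁ ε₂ := lt_min hε₁ hε₂
  exact ⟨min ε₁ ε₂ / 2, half_pos hε, _, mapsTo_midpoint_derivIter_slice hC hb hε.le γ₂ γ₁ x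
    (derivIter_slice_subset_of_le hε₁.le (min_le_left _ _) hb γ₁ hx)
    (derivIter_slice_subset_of_le hε₂.le (min_le_right _ _) hb γ₂ ht)⟩

open Ordinal in
theorem nadd_mem_belowSzlenk (hAc : Convex ℝ A) (hBc : Convex ℝ B)
    (hAb : IsBounded (e '' A)) (hBb : IsBounded (e '' B)) {r₁ r₂ : Ordinal}
    (h₁ : r₁ ∈ belowSzlenk e A) (h₂ : r₂ ∈ belowSzlenk e B) :
    r₁ ♯ r₂ ∈ belowSzlenk e A ∪ belowSzlenk e B := by
  rcases (isLowerSet_belowSzlenk (e := e) (C := A)).total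
      (isLowerSet_belowSzlenk (e := e) (C := B)) with hAB | hBA
  · rw [union_eq_right.2 hAB]
    exact nadd_mem_of_isLowerSet isLowerSet_belowSzlenk
      (fun _ ha _ hb => add_mem_belowSzlenk hBc hBb ha hb) (hAB h₁) h₂
  · rw [union_eq_left.2 hBA]
    exact nadd_mem_of_isLowerSet isLowerSet_belowSzlenk
      (fun _ ha _ hb => add_mem_belowSzlenk hAc hAb ha hb) h₁ (hBA h₂)

theorem belowSzlenk_add_subset [T2Space β] (hA : IsCompact A) (hB : IsCompact B)
    (hAc : Convex ℝ A) (hBc : Convex ℝ B) (hAb : IsBounded (e '' A)) (hBb : IsBounded (e '' B)) :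
    belowSzlenk e (A + B) ⊆ belowSzlenk e A ∪ belowSzlenk e B := by
  rintro ξ ⟨μ, hμ, hne⟩
  by_contra hξ
  have hν : 0 < μ / 4 := by positivity
  have hempty : ∀ {C}, ξ ∉ belowSzlenk e C → derivIter (slice e (μ / 4)) C ξ = ∅ :=
    fun h => not_nonempty_iff_eq_empty.1 fun hne => h ⟨_, hν, hne⟩
  have hprod := derivIter_prod_eq_empty hA.isClosed hB.isClosed hAb hBb
    (fun r₁ r₂ h₁ h₂ => not_le.1 fun hle => hξ <| (isLowerSet_belowSzlenk.union
      isLowerSet_belowSzlenk) hle (nadd_mem_belowSzlenk hAc hBc hAb hBb ⟨_, hν, h₁⟩ ⟨_, hν, h₂⟩))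
    (hempty fun h => hξ (Or.inl h)) (hempty fun h => hξ (Or.inr h))
  -- addition is 2-Lipschitz from the max-distance, and `slice_image_subset` costs another factor 2
  have hsum := derivIter_slice_image_subset (φ := fun p : β × β => p.1 + p.2) (ε := μ)
    (ν := μ / 4) (continuous_fst.add continuous_snd) zero_le_two (by linarith)
    (dist_map_add_add_le e) (hA.prod hB) (by rw [prodMap_image_prod]; exact hAb.prod hBb)
    (by rw [add_image_prod, image_add]; exact hAb.add hBb) ξ
  rw [add_image_prod, hprod, image_empty] at hsum
  exact hne.ne_empty (subset_empty_iff.1 hsum)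

theorem belowSzlenk_add [T2Space β] (hA : IsCompact A) (hB : IsCompact B)
    (hA₀ : A.Nonempty) (hB₀ : B.Nonempty) (hAc : Convex ℝ A) (hBc : Convex ℝ B)
    (hAb : IsBounded (e '' A)) (hBb : IsBounded (e '' B)) :
    belowSzlenk e (A + B) = belowSzlenk e A ∪ belowSzlenk e B := by
  have hb : IsBounded (e '' (A + B)) := by rw [image_add]; exact hAb.add hBb
  refine (belowSzlenk_add_subset hA hB hAc hBc hAb hBb).antisymm <|
    union_subset (belowSzlenk_subset_add hb hB₀.some_mem) ?_
  rw [add_comm A B] at hb ⊢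
  exact belowSzlenk_subset_add hb hA₀.some_mem

end Linear

section WeakDual

variable {X : Type*} [NormedAddCommGroup X] [NormedSpace ℝ X]

theorem toStrongDual_image_inter (C : Set (StrongDual ℝ X)) (W : Set (WeakDual ℝ X)) :
    WeakDual.toStrongDual '' (StrongDual.toWeakDual '' C ∩ W) =
      C ∩ (fun g => StrongDual.toWeakDual g) ⁻¹' W := by
  rw [← image_inter_preimage, image_image]
  simp

theorem toWeakDual_image_szSlice (ε : ℝ) (C : Set (StrongDual ℝ X)) :
    StrongDual.toWeakDual '' szSlice ε C =
      slice WeakDual.toStrongDual ε (StrongDual.toWeakDual '' C) := by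
  ext g
  constructor
  · rintro ⟨f, ⟨hf, hW⟩, rfl⟩
    exact ⟨mem_image_of_mem _ hf, fun W hW' hfW => toStrongDual_image_inter C W ▸ hW W hW' hfW⟩
  · rintro ⟨⟨f, hf, rfl⟩, hW⟩
    exact ⟨f, ⟨hf, fun W hW' hfW => toStrongDual_image_inter C W ▸ hW W hW' hfW⟩, rfl⟩

theorem derivIter_szSlice_nonempty_iff (ε : ℝ) (C : Set (StrongDual ℝ X)) (ξ : Ordinal) :
    (derivIter (szSlice ε) C ξ).Nonempty ↔
      (derivIter (slice WeakDual.toStrongDual ε) (StrongDual.toWeakDual '' C) ξ).Nonempty := by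
  rw [← image_derivIter StrongDual.toWeakDual.bijective (toWeakDual_image_szSlice ε) ξ,
    image_nonempty]

theorem isBounded_toStrongDual_image [CompleteSpace X] {S : Set (WeakDual ℝ X)}
    (hS : IsCompact S) : IsBounded (WeakDual.toStrongDual '' S) := by
  rw [LinearEquiv.image_eq_preimage_symm]
  exact WeakDual.isBounded_iff_isVonNBounded.2 (hS.isVonNBounded (𝕜 := ℝ))

end WeakDual

/-- `Sz(K + L) = max (Sz K) (Sz L)` for convex `w*`-compact sets. -/
theorem szlenk_minkowski_convex {X : Type*} [NormedAddCommGroup X] [NormedSpace ℝ X]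
    [CompleteSpace X] (K L : Set (StrongDual ℝ X)) (hK : K.Nonempty) (hL : L.Nonempty)
    (hKc : IsCompact ((fun f => StrongDual.toWeakDual f) '' K))
    (hLc : IsCompact ((fun f => StrongDual.toWeakDual f) '' L))
    (hKconv : Convex ℝ K) (hLconv : Convex ℝ L) :
    ∀ ξ : Ordinal,
      (∃ ε : ℝ, 0 < ε ∧ (derivIter (szSlice ε) (K + L) ξ).Nonempty) ↔
        ((∃ ε : ℝ, 0 < ε ∧ (derivIter (szSlice ε) K ξ).Nonempty) ∨
          (∃ ε : ℝ, 0 < ε ∧ (derivIter (szSlice ε) L ξ).Nonempty)) := by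
  have key := belowSzlenk_add (e := (WeakDual.toStrongDual : WeakDual ℝ X ≃ₗ[ℝ] _).toLinearMap)
    hKc hLc (hK.image _) (hL.image _) (hKconv.linear_image StrongDual.toWeakDual.toLinearMap)
    (hLconv.linear_image StrongDual.toWeakDual.toLinearMap) (isBounded_toStrongDual_image hKc)
    (isBounded_toStrongDual_image hLc)
  simp only [LinearEquiv.coe_toLinearMap] at key
  intro ξ
  simp only [derivIter_szSlice_nonempty_iff, image_add]
  exact Set.ext_iff.1 key ξ
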